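/- arXiv:1604.03687 — 6 statements merged into one kernel-verified Lean document; each statement's English description precedes it below -/
import Mathlib

section
/- Suppose {I_0, I_1} is a partition of I ⊆ ℕ^Λ with post(I_i) ⊆ pre(O_i) for i ∈ {0,1}, where O_0 and O_1 are disjoint sets satisfying post(O_i) = O_i. Then I_i = I ∩ pre(O_i) for i ∈ {0,1}. -/
/-- One reaction step of a CRN with reaction set `R`. -/
def Step {Λ : Type*} (R : Set ((Λ → ℕ) × (Λ → ℕ))) (c c' : Λ → ℕ) : Prop :=
  ∃ rp ∈ R, (∀ s, rp.1 s ≤ c s) ∧ c' = fun s => c s - rp.1 s + rp.2 s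

/-- Reachability: reflexive-transitive closure of `Step`. -/
def Reach {Λ : Type*} (R : Set ((Λ → ℕ) × (Λ → ℕ))) : (Λ → ℕ) → (Λ → ℕ) → Prop :=
  Relation.ReflTransGen (Step R)

def preS {Λ : Type*} (R : Set ((Λ → ℕ) × (Λ → ℕ))) (X : Set (Λ → ℕ)) : Set (Λ → ℕ) :=
  {c | ∃ x ∈ X, Reach R c x}

def postS {Λ : Type*} (R : Set ((Λ → ℕ) × (Λ → ℕ))) (X : Set (Λ → ℕ)) : Set (Λ → ℕ) :=
  {c' | ∃ x ∈ X, Reach R x c'}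

/-- A linear subset of ℕ^Λ. -/
def LinearSet {Λ : Type*} (X : Set (Λ → ℕ)) : Prop :=
  ∃ (b : Λ → ℕ) (k : ℕ) (v : Fin k → (Λ → ℕ)),
    X = {c | ∃ n : Fin k → ℕ, c = b + ∑ i, n i • v i}

/-- A semilinear set: finite union of linear sets. -/
def Semilinear {Λ : Type*} (X : Set (Λ → ℕ)) : Prop :=
  ∃ (k : ℕ) (L : Fin k → Set (Λ → ℕ)), (∀ i, LinearSet (L i)) ∧ X = ⋃ i, L i

/-- Upward closed under the componentwise order. -/
def UpClosed {Λ : Type*} (X : Set (Λ → ℕ)) : Prop :=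
  ∀ c ∈ X, ∀ c' : Λ → ℕ, c ≤ c' → c' ∈ X

/-- If {I_0,I_1} partitions I, post(I_i) ⊆ pre(O_i), O_0,O_1 disjoint and stable,
then I_i = I ∩ pre(O_i). -/
theorem partition_eq_inter_pre {Λ : Type*} (R : Set ((Λ → ℕ) × (Λ → ℕ))) (hR : R.Finite)
    (I : Set (Λ → ℕ)) (I' O : Bool → Set (Λ → ℕ))
    (hcover : I' false ∪ I' true = I) (hdisjI : I' false ∩ I' true = ∅)
    (hpost : ∀ b, postS R (I' b) ⊆ preS R (O b))
    (hdisjO : O false ∩ O true = ∅)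
    (hstable : ∀ b, postS R (O b) = O b) :
    ∀ b, I' b = I ∩ preS R (O b) := by
  intro b
  have hmem : ∀ x b, x ∈ I' b → x ∈ preS R (O b) := by
    intro x b hx
    exact hpost b ⟨x, hx, Relation.ReflTransGen.refl⟩
  have key : ∀ x b, x ∈ I' b → x ∈ preS R (O (!b)) → False := by
    intro x b hx ⟨o, ho, hreach⟩
    -- o ∈ postS R (I' b) ⊆ preS R (O b)
    have ho2 : o ∈ preS R (O b) := hpost b ⟨x, hx, hreach⟩
    obtain ⟨o', ho', hreach'⟩ := ho2
    -- o' ∈ postS (O !b) = O !b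
    have h1 : o' ∈ O (!b) := by
      rw [← hstable (!b)]; exact ⟨o, ho, hreach'⟩
    have : o' ∈ O false ∩ O true := by
      cases b
      · exact ⟨ho', by simpa using h1⟩
      · exact ⟨by simpa using h1, ho'⟩
    rw [hdisjO] at this; exact this
  ext x
  constructor
  · intro hx
    refine ⟨?_, hmem x b hx⟩
    rw [← hcover]; cases b
    · exact Or.inl hx
    · exact Or.inr hx
  · rintro ⟨hxI, hxpre⟩
    rw [← hcover] at hxI
    rcases hxI with h | h
    · cases b
      · exact h
      · exact absurd hxpre (fun hp => key x false h (by simpa using hp))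
    · cases b
      · exact absurd hxpre (fun hp => key x true h (by simpa using hp))
      · exact h
end

section
/- Output-set enlargement preserves the decided set: let {I_0, I_1} partition I with post(I_i) ⊆ pre(O_i) and I_i = I ∩ pre(O_i) for i ∈ {0,1}. If O'_i ⊇ O_i satisfies post(O'_i) ∩ O_{1−i} = ∅ for i ∈ {0,1}, then I ∩ pre(O'_0) and I ∩ pre(O'_1) are disjoint and I_i = I ∩ pre(O'_i) for i ∈ {0,1}. -/
/-- Output-set enlargement preserves the decided set. -/
theorem output_enlargement {Λ : Type*} (R : Set ((Λ → ℕ) × (Λ → ℕ))) (hR : R.Finite)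
    (I : Set (Λ → ℕ)) (I' O O' : Bool → Set (Λ → ℕ))
    (hcover : I' false ∪ I' true = I) (hdisjI : I' false ∩ I' true = ∅)
    (hpost : ∀ b, postS R (I' b) ⊆ preS R (O b))
    (heq : ∀ b, I' b = I ∩ preS R (O b))
    (hsub : ∀ b, O b ⊆ O' b)
    (hdisj : ∀ b, postS R (O' b) ∩ O (!b) = ∅) :
    (I ∩ preS R (O' false)) ∩ (I ∩ preS R (O' true)) = ∅ ∧
      ∀ b, I' b = I ∩ preS R (O' b) := by
  have key : ∀ b, I ∩ preS R (O' b) ⊆ I' b := by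
    intro b c hc
    obtain ⟨hcI, x, hxO', hreach⟩ := hc
    have hun : c ∈ I' false ∪ I' true := by rw [hcover]; exact hcI
    by_cases hcb : c ∈ I' b
    · exact hcb
    · exfalso
      have hcnb : c ∈ I' (!b) := by
        rcases hun with h | h <;> cases b <;> first | exact h | exact absurd h hcb
      have hx : x ∈ postS R (I' (!b)) := ⟨c, hcnb, hreach⟩
      obtain ⟨y, hyO, hxy⟩ := hpost (!b) hx
      have : y ∈ postS R (O' b) ∩ O (!b) := by
        refine ⟨⟨x, hxO', hxy⟩, ?_⟩
        cases b <;> simpa using hyO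
      rw [hdisj b] at this
      exact this
  have key2 : ∀ b, I' b = I ∩ preS R (O' b) := by
    intro b
    apply Set.Subset.antisymm _ (key b)
    intro c hc
    rw [heq b] at hc
    obtain ⟨hcI, x, hxO, hreach⟩ := hc
    exact ⟨hcI, x, hsub b hxO, hreach⟩
  refine ⟨?_, key2⟩
  rw [← key2 false, ← key2 true, hdisjI]
end

section
/- Let f : ℕ^Λ → ℤ be a monoid homomorphism, V = { c : f(c) > 0 }, O = { c : post(c) ⊆ V }, and W = { c : ∀ c' ∈ post(c), f(c') ≥ f(c) }. Then pre(O ∩ W) = pre(O). -/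
/-- pre(O ∩ W) = pre(O). -/
theorem pre_O_inter_W {Λ : Type*} (R : Set ((Λ → ℕ) × (Λ → ℕ))) (hR : R.Finite)
    (f : (Λ → ℕ) → ℤ) (hf : ∀ c c', f (c + c') = f c + f c')
    (V O W : Set (Λ → ℕ))
    (hV : V = {c | 0 < f c})
    (hO : O = {c | ∀ c', Reach R c c' → c' ∈ V})
    (hW : W = {c | ∀ c', Reach R c c' → f c ≤ f c'}) :
    preS R (O ∩ W) = preS R O := by
  apply Set.Subset.antisymm
  · rintro c ⟨x, ⟨hxO, _⟩, hr⟩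
    exact ⟨x, hxO, hr⟩
  · rintro c ⟨o, hoO, hr⟩
    have hpos : ∀ c', Reach R o c' → 0 < f c' := by
      intro c' h
      have h1 : c' ∈ V := (hO ▸ hoO) c' h
      rwa [hV] at h1
    set T : Set ℕ := {n | ∃ c', Reach R o c' ∧ (f c').toNat = n} with hT
    have hTne : T.Nonempty := ⟨(f o).toNat, o, Relation.ReflTransGen.refl, rfl⟩
    obtain ⟨o', ho', hfo'⟩ := Nat.sInf_mem hTne
    refine ⟨o', ⟨?_, ?_⟩, hr.trans ho'⟩
    · rw [hO]
      intro c' h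
      exact (hO ▸ hoO) c' (ho'.trans h)
    · rw [hW]
      intro c' h
      have h1 : (f c').toNat ∈ T := ⟨c', ho'.trans h, rfl⟩
      have h2 : sInf T ≤ (f c').toNat := Nat.sInf_le h1
      rw [← hfo'] at h2
      have p1 := hpos o' ho'
      have p2 := hpos c' (ho'.trans h)
      omega
end

section
/- Let f : ℕ^Λ → ℤ be a monoid homomorphism, V = { c : f(c) > 0 }, O = { c : post(c) ⊆ V }, and W = { c : ∀ c' ∈ post(c), f(c') ≥ f(c) }. Then O ∩ W is semilinear. -/
/-!
Since `c ∈ post(c)`, a configuration of `W` with positive `f` keeps `f` positive along every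
execution, so `O ∩ W = V ∩ W`. Adding `e` to a configuration shifts each of its executions by `e`
and `f` by `f e`, so the complement of `W` is upward closed; by Dickson's lemma it is a finite
union of cones `m + ℕ^Λ`, hence semilinear, and so is `W` by the Ginsburg–Spanier complementation
theorem. Finally `V` is the preimage of `[1, ∞)` under the homomorphism `f`.
-/

section

open Set Pointwise

variable {Λ : Type*}

theorem LinearSet.of_isLinearSet {X : Set (Λ → ℕ)} (hX : IsLinearSet X) : LinearSet X := by
  obtain ⟨b, k, g, rfl⟩ := isLinearSet_iff_exists_fin_addMonoidHom.1 hX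
  refine ⟨b, k, fun i => g (Pi.single i 1), ?_⟩
  ext c
  have hsum (n : Fin k → ℕ) : ∑ i, n i • Pi.single i 1 = n := by
    ext j; simp [Finset.sum_apply, Pi.single_apply]
  simp only [mem_vadd_set, mem_range, vadd_eq_add, exists_exists_eq_and, mem_ofPred_eq,
    ← map_nsmul, ← map_sum, hsum]
  exact exists_congr fun n => eq_comm

theorem Semilinear.of_isSemilinearSet {X : Set (Λ → ℕ)} (hX : IsSemilinearSet X) :
    Semilinear X := by
  obtain ⟨S, hS, rfl⟩ := isSemilinearSet_iff.1 hX
  refine ⟨S.card, fun i => S.equivFin.symm i,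
    fun i => .of_isLinearSet (hS _ (S.equivFin.symm i).2), ?_⟩
  rw [sUnion_eq_iUnion]
  exact (S.equivFin.symm.iSup_comp (g := fun s : S => (s : Set (Λ → ℕ)))).symm

theorem UpClosed.isSemilinearSet [Finite Λ] {U : Set (Λ → ℕ)} (hU : UpClosed U) :
    IsSemilinearSet U := by
  have hfin : {m | Minimal (· ∈ U) m}.Finite :=
    WellQuasiOrderedLE.finite_of_isAntichain (setOfPred_minimal_antichain _)
  have hU_eq : U = ⋃ m ∈ {m | Minimal (· ∈ U) m}, m +ᵥ (univ : Set (Λ → ℕ)) := by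
    ext c
    simp only [mem_iUnion, mem_ofPred_eq, exists_prop, mem_vadd_set]
    constructor
    · intro hc
      obtain ⟨m, hmc, hm⟩ := exists_minimal_le_of_wellFoundedLT (· ∈ U) c hc
      obtain ⟨d, rfl⟩ := le_iff_exists_add.1 hmc
      exact ⟨m, hm, d, trivial, rfl⟩
    · rintro ⟨m, hm, d, -, rfl⟩
      exact hU m hm.prop _ le_self_add
  rw [hU_eq]
  exact .biUnion hfin fun m _ => (IsLinearSet.univ.vadd m).isSemilinearSet

theorem Int.isLinearSet_Ici (a : ℤ) : IsLinearSet (Ici a) := by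
  refine ⟨a, {1}, finite_singleton 1, ?_⟩
  ext z
  simp only [mem_Ici, mem_vadd_set, SetLike.mem_coe, AddSubmonoid.mem_closure_singleton,
    nsmul_eq_mul, mul_one, exists_exists_eq_and, vadd_eq_add]
  exact ⟨fun h => ⟨(z - a).toNat, by omega⟩, fun ⟨n, hn⟩ => by omega⟩

theorem Step.add_right {R : Set ((Λ → ℕ) × (Λ → ℕ))} {a b : Λ → ℕ} (h : Step R a b)
    (e : Λ → ℕ) : Step R (a + e) (b + e) := by
  obtain ⟨r, hr, hle, rfl⟩ := h
  refine ⟨r, hr, fun s => (hle s).trans (Nat.le_add_right _ _), funext fun s => ?_⟩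
  simp only [Pi.add_apply]
  have := hle s
  omega

theorem Reach.add_right {R : Set ((Λ → ℕ) × (Λ → ℕ))} {a b : Λ → ℕ} (h : Reach R a b)
    (e : Λ → ℕ) : Reach R (a + e) (b + e) :=
  Relation.ReflTransGen.lift (· + e) (fun _ _ h => Step.add_right h e) _ _ h

theorem upClosed_compl_setOf_forall_reach_le {G : Type*} [AddCommMonoid G] [PartialOrder G]
    [IsOrderedCancelAddMonoid G] (R : Set ((Λ → ℕ) × (Λ → ℕ))) {f : (Λ → ℕ) → G}
    (hf : ∀ c c', f (c + c') = f c + f c') :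
    UpClosed {c | ∀ c', Reach R c c' → f c ≤ f c'}ᶜ := by
  intro c hc d hcd hd
  obtain ⟨e, rfl⟩ := le_iff_exists_add.1 hcd
  refine hc fun c' hc' => ?_
  have := hd _ (hc'.add_right e)
  rwa [hf, hf, add_le_add_iff_right] at this

end

theorem O_inter_W_semilinear_general {Λ : Type*} [Fintype Λ]
    (R : Set ((Λ → ℕ) × (Λ → ℕ)))
    (f : (Λ → ℕ) → ℤ) (hf : ∀ c c', f (c + c') = f c + f c')
    (V O W : Set (Λ → ℕ))
    (hV : V = {c | 0 < f c})
    (hO : O = {c | ∀ c', Reach R c c' → c' ∈ V})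
    (hW : W = {c | ∀ c', Reach R c c' → f c ≤ f c'}) :
    Semilinear (O ∩ W) := by
  have hOW : O ∩ W = V ∩ W := by
    subst hV hO hW
    ext c
    exact ⟨fun ⟨hO, hW⟩ => ⟨hO c .refl, hW⟩,
      fun ⟨hV, hW⟩ => ⟨fun c' hc' => hV.trans_le (hW c' hc'), hW⟩⟩
  have hV_semilinear : IsSemilinearSet V := by
    rw [hV]
    exact (Int.isLinearSet_Ici 1).isSemilinearSet.preimage (AddMonoidHom.mk' f hf)
  have hW_semilinear : IsSemilinearSet W := by
    rw [← compl_compl W, hW]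
    exact (upClosed_compl_setOf_forall_reach_le R hf).isSemilinearSet.compl
  rw [hOW]
  exact .of_isSemilinearSet (hV_semilinear.inter hW_semilinear)

/-- O ∩ W is semilinear. -/
theorem O_inter_W_semilinear {Λ : Type*} [Fintype Λ]
    (R : Set ((Λ → ℕ) × (Λ → ℕ))) (hR : R.Finite)
    (f : (Λ → ℕ) → ℤ) (hf : ∀ c c', f (c + c') = f c + f c')
    (V O W : Set (Λ → ℕ))
    (hV : V = {c | 0 < f c})
    (hO : O = {c | ∀ c', Reach R c c' → c' ∈ V})
    (hW : W = {c | ∀ c', Reach R c c' → f c ≤ f c'}) :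
    Semilinear (O ∩ W) :=
  O_inter_W_semilinear_general R f hf V O W hV hO hW
end

section
/- Every con-CRD is a gen-CRD whose defining sets I, O_0, O_1 are all semilinear, provided every reaction with empty product set also has empty reactant set. -/
section Semilinear

variable {Λ : Type*}

theorem linearSet_of_fintype {ι : Type*} [Fintype ι] (b : Λ → ℕ) (v : ι → Λ → ℕ) :
    LinearSet {c | ∃ n : ι → ℕ, c = b + ∑ i, n i • v i} := by
  let e := Fintype.equivFin ι
  refine ⟨b, Fintype.card ι, v ∘ e.symm, Set.ext fun c => ?_⟩
  simp only [Set.mem_ofPred_eq, Function.comp_apply]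
  constructor
  · rintro ⟨n, rfl⟩
    exact ⟨n ∘ e.symm, by rw [← e.symm.sum_comp]; rfl⟩
  · rintro ⟨n, rfl⟩
    exact ⟨n ∘ e, by rw [← e.sum_comp]; simp⟩

theorem semilinear_iUnion_of_linearSet {ι : Type*} [Finite ι] (F : ι → Set (Λ → ℕ))
    (h : ∀ i, LinearSet (F i)) : Semilinear (⋃ i, F i) := by
  obtain ⟨k, ⟨e⟩⟩ := Finite.exists_equiv_fin ι
  exact ⟨k, F ∘ e.symm, fun _ => h _, (e.symm.surjective.iUnion_comp F).symm⟩

def truncate (B : ℕ) (c : Λ → ℕ) : Λ → ℕ := fun s => min (c s) B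

theorem truncate_le (B : ℕ) (c : Λ → ℕ) : truncate B c ≤ c := fun _ => min_le_left _ _

theorem truncate_truncate {B B' : ℕ} (h : B ≤ B') (c : Λ → ℕ) :
    truncate B (truncate B' c) = truncate B c :=
  funext fun _ => by simp only [truncate]; omega

theorem linearSet_setOf_truncate_eq [Fintype Λ] {B : ℕ} {t : Λ → ℕ}
    (ht : ∀ s, t s ≤ B) :
    LinearSet {c | truncate B c = t} := by
  classical
  convert linearSet_of_fintype t fun s => Pi.single s (if t s = B then 1 else 0) using 1
  ext c
  simp only [Set.mem_ofPred_eq, funext_iff, truncate, Pi.add_apply, Finset.sum_apply,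
    Pi.smul_apply, Pi.single_apply, smul_eq_mul, mul_ite, mul_zero, Finset.sum_ite_eq,
    Finset.mem_univ, if_true]
  constructor
  · intro h
    refine ⟨fun s => c s - B, fun s => ?_⟩
    have := h s
    have := ht s
    dsimp only
    split_ifs <;> omega
  · rintro ⟨n, hn⟩ s
    have := hn s
    have := ht s
    split_ifs at * <;> omega

def TruncationInvariant (B : ℕ) (X : Set (Λ → ℕ)) : Prop :=
  ∀ c, truncate B c ∈ X ↔ c ∈ X

namespace TruncationInvariant

variable {B : ℕ} {X Y : Set (Λ → ℕ)}

theorem mono {B' : ℕ} (h : TruncationInvariant B X) (hB : B ≤ B') :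
    TruncationInvariant B' X := fun c => by
  rw [← h, truncate_truncate hB, h]

theorem compl (h : TruncationInvariant B X) : TruncationInvariant B Xᶜ :=
  fun c => not_congr (h c)

theorem diff (hX : TruncationInvariant B X) (hY : TruncationInvariant B Y) :
    TruncationInvariant B (X \ Y) :=
  fun c => and_congr (hX c) (not_congr (hY c))

theorem semilinear [Fintype Λ] (h : TruncationInvariant B X) : Semilinear X := by
  classical
  have : Finite ↥(X ∩ Set.Iic fun _ => B) :=
    ((Set.finite_Iic _).subset Set.inter_subset_right).to_subtype
  have hX : X = ⋃ t : ↥(X ∩ Set.Iic fun _ => B), {c | truncate B c = t} := by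
    ext c
    simp only [Set.mem_iUnion, Set.mem_ofPred_eq, Subtype.exists, exists_prop, Set.mem_inter_iff,
      Set.mem_Iic, exists_eq_right']
    exact ⟨fun hc => ⟨(h c).2 hc, fun s => min_le_right _ _⟩, fun hc => (h c).1 hc.1⟩
  rw [hX]
  exact semilinear_iUnion_of_linearSet _ fun t => linearSet_setOf_truncate_eq t.2.2

end TruncationInvariant

theorem truncationInvariant_setOf_forall_eq_zero {B : ℕ} (hB : 0 < B) (p : Λ → Prop) :
    TruncationInvariant B {c | ∀ s, p s → c s = 0} := fun c => by
  simp only [Set.mem_ofPred_eq, truncate]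
  exact forall_congr' fun s => imp_congr_right fun _ => by omega

theorem truncationInvariant_singleton_zero {B : ℕ} (hB : 0 < B) :
    TruncationInvariant B ({0} : Set (Λ → ℕ)) := fun c => by
  simpa [funext_iff] using truncationInvariant_setOf_forall_eq_zero hB (fun _ => True) c

/-- Dickson's lemma: `U` has finitely many minimal elements, and any `B` bounding
their coordinates works. -/
theorem UpClosed.exists_truncationInvariant [Finite Λ] {U : Set (Λ → ℕ)} (hU : UpClosed U) :
    ∃ B, TruncationInvariant B U := by
  have hmin : {m | Minimal (· ∈ U) m}.Finite :=
    WellQuasiOrderedLE.finite_of_isAntichain (setOfPred_minimal_antichain _)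
  obtain ⟨f, hf⟩ := hmin.bddAbove
  obtain ⟨B, hB⟩ := (Set.finite_range f).bddAbove
  refine ⟨B, fun c => ⟨fun hc => hU _ hc c (truncate_le B c), fun hc => ?_⟩⟩
  obtain ⟨m, hmc, hm⟩ := exists_minimal_le_of_wellFoundedLT (· ∈ U) c hc
  exact hU m hm.prop _ fun s => le_min (hmc s) ((hf hm s).trans (hB ⟨s, rfl⟩))

end Semilinear

section Reachability

variable {Λ : Type*} {R : Set ((Λ → ℕ) × (Λ → ℕ))}

/-- Reactions applicable to `c` remain applicable to any larger configuration. -/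
theorem Reach.exists_le_of_le {c c' x : Λ → ℕ} (h : Reach R c x) (hle : c ≤ c') :
    ∃ x', x ≤ x' ∧ Reach R c' x' := by
  induction h with
  | refl => exact ⟨c', hle, .refl⟩
  | tail _ hstep ih =>
    obtain ⟨y', hyy', hreach⟩ := ih
    obtain ⟨rp, hrp, happ, rfl⟩ := hstep
    exact ⟨fun s => y' s - rp.1 s + rp.2 s,
      fun s => Nat.add_le_add_right (Nat.sub_le_sub_right (hyy' s) _) _,
      hreach.tail ⟨rp, hrp, fun s => (happ s).trans (hyy' s), rfl⟩⟩

theorem UpClosed.preS {X : Set (Λ → ℕ)} (hX : UpClosed X) : UpClosed (preS R X) := by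
  rintro c ⟨x, hx, hreach⟩ c' hle
  obtain ⟨x', hxx', hreach'⟩ := hreach.exists_le_of_le hle
  exact ⟨x', hX x hx x' hxx', hreach'⟩

theorem eq_zero_of_step_zero (hprod : ∀ rp ∈ R, rp.2 = 0 → rp.1 = 0) {c : Λ → ℕ}
    (h : Step R c 0) : c = 0 := by
  obtain ⟨rp, hrp, -, heq⟩ := h
  have hp : rp.2 = 0 := funext fun s => by have := congrFun heq s; dsimp at this ⊢; omega
  have hr := hprod rp hrp hp
  funext s
  have := congrFun heq s
  have := congrFun hr s
  dsimp at *
  omega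

theorem eq_zero_of_reach_zero (hprod : ∀ rp ∈ R, rp.2 = 0 → rp.1 = 0) {c : Λ → ℕ}
    (h : Reach R c 0) : c = 0 := by
  induction h using Relation.ReflTransGen.head_induction_on with
  | refl => rfl
  | head hstep _ ih => exact eq_zero_of_step_zero hprod (ih ▸ hstep)

theorem setOf_forall_reach_mem_diff (hprod : ∀ rp ∈ R, rp.2 = 0 → rp.1 = 0)
    {A B : Set (Λ → ℕ)} (hAB : A ∪ B = {0}ᶜ) :
    {c | ∀ c', Reach R c c' → c' ∈ A \ B} = (preS R B)ᶜ \ {0} := by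
  have hA : ∀ c ∉ B, c ∈ A ↔ c ≠ 0 := fun c hc => by
    rw [← Set.mem_compl_singleton_iff, ← hAB, Set.mem_union, or_iff_left hc]
  ext c
  simp only [Set.mem_ofPred_eq, Set.mem_sdiff, Set.mem_compl_iff, Set.mem_singleton_iff, preS]
  constructor
  · intro h
    exact ⟨fun ⟨x, hx, hcx⟩ => (h x hcx).2 hx, (hA c (h c .refl).2).1 (h c .refl).1⟩
  · rintro ⟨hpre, hc⟩ c' hcc'
    have hc' : c' ∉ B := fun hB => hpre ⟨c', hB, hcc'⟩
    exact ⟨(hA c' hc').2 fun h0 => hc (eq_zero_of_reach_zero hprod (h0 ▸ hcc')), hc'⟩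

theorem disjoint_setOf_forall_reach_preS {A B : Set (Λ → ℕ)} (hAB : Disjoint A B) :
    Disjoint {c | ∀ c', Reach R c c' → c' ∈ A}
      (preS R {c | ∀ c', Reach R c c' → c' ∈ B}) := by
  rw [Set.disjoint_left]
  rintro c hc ⟨x, hx, hcx⟩
  exact Set.disjoint_left.1 hAB (hc x hcx) (hx x .refl)

theorem eq_inter_preS_of_postS_subset {I : Set (Λ → ℕ)} {I' O : Bool → Set (Λ → ℕ)}
    (hcover : I' false ∪ I' true = I) (hpost : ∀ b, postS R (I' b) ⊆ preS R (O b))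
    (hO : ∀ b, Disjoint (O b) (preS R (O !b))) (b : Bool) : I' b = I ∩ preS R (O b) := by
  have hI : I = I' b ∪ I' !b := by cases b <;> simp [← hcover, Set.union_comm]
  refine Set.Subset.antisymm (fun c hc => ⟨hI ▸ Or.inl hc, hpost b ⟨c, hc, .refl⟩⟩) ?_
  rintro c ⟨hcI, x, hx, hcx⟩
  rw [hI] at hcI
  refine hcI.resolve_right fun hc => Set.disjoint_left.1 (hO b) hx ?_
  exact hpost (!b) ⟨c, hc, hcx⟩

end Reachability

section Output

variable {Λ : Type*}

theorem upClosed_setOf_exists_ne_zero (S : Set Λ) :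
    UpClosed {c : Λ → ℕ | ∃ s ∈ S, c s ≠ 0} :=
  fun _ ⟨s, hs, hc⟩ _ hle => ⟨s, hs, fun h => hc (Nat.eq_zero_of_le_zero (h ▸ hle s))⟩

theorem setOf_exists_ne_zero_union {S T : Set Λ} (hST : S ∪ T = Set.univ) :
    {c : Λ → ℕ | ∃ s ∈ S, c s ≠ 0} ∪ {c | ∃ s ∈ T, c s ≠ 0} = {0}ᶜ := by
  ext c
  simp only [Set.mem_union, Set.mem_ofPred_eq, Set.mem_compl_singleton_iff, Ne, funext_iff,
    Pi.zero_apply, not_forall]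
  refine ⟨fun h => ?_, fun ⟨s, hs⟩ => ?_⟩
  · rcases h with ⟨s, -, hs⟩ | ⟨s, -, hs⟩ <;> exact ⟨s, hs⟩
  · rcases (hST ▸ Set.mem_univ s : s ∈ S ∪ T) with h | h
    exacts [Or.inl ⟨s, h, hs⟩, Or.inr ⟨s, h, hs⟩]

end Output

theorem con_crd_is_semilinear_gen_crd_general {Λ : Type*} [Fintype Λ]
    (R : Set ((Λ → ℕ) × (Λ → ℕ)))
    (hprod : ∀ rp ∈ R, rp.2 = (0 : Λ → ℕ) → rp.1 = (0 : Λ → ℕ))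
    (Sig : Set Λ) (Γ : Bool → Set Λ)
    (hcover : Γ false ∪ Γ true = Set.univ)
    (I : Set (Λ → ℕ)) (hI : I = {c | ∀ s ∉ Sig, c s = 0} \ {0})
    (L O : Bool → Set (Λ → ℕ))
    (hL : ∀ b, L b = {c | ∃ s ∈ Γ b, c s ≠ 0})
    (hO : ∀ b, O b = {c | ∀ c', Reach R c c' → c' ∈ L b \ L !b})
    (I' : Bool → Set (Λ → ℕ))
    (hcoverI : I' false ∪ I' true = I)
    (hpost : ∀ b, postS R (I' b) ⊆ preS R (O b)) :
    Semilinear I ∧ (∀ b, Semilinear (O b)) ∧ (∀ b, I' b = I ∩ preS R (O b)) := by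
  have hLcover (b : Bool) : L b ∪ L (!b) = {0}ᶜ := by
    rw [hL, hL]
    exact setOf_exists_ne_zero_union (by cases b <;> simp [← hcover, Set.union_comm])
  refine ⟨?_, fun b => ?_, eq_inter_preS_of_postS_subset hcoverI hpost fun b => ?_⟩
  · rw [hI]
    exact ((truncationInvariant_setOf_forall_eq_zero one_pos _).diff
      (truncationInvariant_singleton_zero one_pos)).semilinear
  · obtain ⟨B, hB⟩ := (hL (!b) ▸ upClosed_setOf_exists_ne_zero (Γ !b)).preS (R := R)
      |>.exists_truncationInvariant
    rw [hO, setOf_forall_reach_mem_diff hprod (hLcover b)]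
    exact ((hB.compl.mono (le_max_left B 1)).diff
      (truncationInvariant_singleton_zero (by omega))).semilinear
  · rw [hO, hO, Bool.not_not]
    exact disjoint_setOf_forall_reach_preS disjoint_sdiff_sdiff

/-- Every con-CRD (with no reaction having empty products and nonempty reactants)
is a gen-CRD whose defining sets I, O_0, O_1 are all semilinear. -/
theorem con_crd_is_semilinear_gen_crd {Λ : Type*} [Fintype Λ]
    (R : Set ((Λ → ℕ) × (Λ → ℕ))) (hR : R.Finite)
    (hprod : ∀ rp ∈ R, rp.2 = (0 : Λ → ℕ) → rp.1 = (0 : Λ → ℕ))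
    (Sig : Set Λ) (Γ : Bool → Set Λ)
    (hcover : Γ false ∪ Γ true = Set.univ) (hdisjΓ : Γ false ∩ Γ true = ∅)
    (I : Set (Λ → ℕ)) (hI : I = {c | ∀ s ∉ Sig, c s = 0} \ {0})
    (L O : Bool → Set (Λ → ℕ))
    (hL : ∀ b, L b = {c | ∃ s ∈ Γ b, c s ≠ 0})
    (hO : ∀ b, O b = {c | ∀ c', Reach R c c' → c' ∈ L b \ L !b})
    (I' : Bool → Set (Λ → ℕ))
    (hcoverI : I' false ∪ I' true = I) (hdisjI : I' false ∩ I' true = ∅)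
    (hpost : ∀ b, postS R (I' b) ⊆ preS R (O b)) :
    Semilinear I ∧ (∀ b, Semilinear (O b)) ∧ (∀ b, I' b = I ∩ preS R (O b)) :=
  con_crd_is_semilinear_gen_crd_general R hprod Sig Γ hcover I hI L O hL hO I' hcoverI hpost
end

section
/- The exi-CRD with species Λ = Σ = Γ_1 = {X, Y} and reactions mX → ∅, mY → ∅, X + Y → ∅ (for a fixed integer m ≥ 2) decides the set of nonzero input configurations with X-count not congruent to Y-count modulo m: for any input configuration c = (x, y) ≠ (0,0), the configuration 0 is reachable from c if and only if x ≡ y (mod m). -/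
/-- One step of the CRN with reactions mX → ∅, mY → ∅, X + Y → ∅. -/
def ModStep (m : ℕ) (c c' : ℕ × ℕ) : Prop :=
  (m ≤ c.1 ∧ c' = (c.1 - m, c.2)) ∨
  (m ≤ c.2 ∧ c' = (c.1, c.2 - m)) ∨
  (1 ≤ c.1 ∧ 1 ≤ c.2 ∧ c' = (c.1 - 1, c.2 - 1))

lemma modstep_inv (m : ℕ) {c c' : ℕ × ℕ} (h : ModStep m c c') :
    ((c.1 : ZMod m) - c.2) = ((c'.1 : ZMod m) - c'.2) := by
  rcases h with ⟨h, rfl⟩ | ⟨h, rfl⟩ | ⟨h1, h2, rfl⟩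
  · simp [Nat.cast_sub h, ZMod.natCast_self]
  · simp [Nat.cast_sub h, ZMod.natCast_self]
  · simp [Nat.cast_sub h1, Nat.cast_sub h2]

lemma modreach_inv (m : ℕ) {a b : ℕ × ℕ} (h : Relation.ReflTransGen (ModStep m) a b) :
    ((a.1 : ZMod m) - a.2) = ((b.1 : ZMod m) - b.2) := by
  induction h with
  | refl => rfl
  | tail _ hstep ih => exact ih.trans (modstep_inv m hstep)

lemma reach_zero (m : ℕ) (hm : 2 ≤ m) :
    ∀ n x y, x + y = n → x ≡ y [MOD m] →
      Relation.ReflTransGen (ModStep m) (x, y) (0, 0) := by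
  intro n
  induction n using Nat.strong_induction_on with
  | _ n ih =>
    intro x y hn hmod
    match x, y with
    | 0, 0 => exact Relation.ReflTransGen.refl
    | 0, y + 1 =>
      have hdvd : m ∣ y + 1 := (Nat.modEq_zero_iff_dvd.mp hmod.symm)
      have hle : m ≤ y + 1 := Nat.le_of_dvd (Nat.succ_pos y) hdvd
      have hstep : ModStep m (0, y + 1) (0, y + 1 - m) := Or.inr (Or.inl ⟨hle, rfl⟩)
      refine Relation.ReflTransGen.head hstep (ih (0 + (y + 1 - m)) ?_ 0 (y + 1 - m) rfl ?_)
      · omega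
      · exact (Nat.modEq_zero_iff_dvd.mpr ((Nat.dvd_sub hdvd (dvd_refl m)))).symm
    | x + 1, 0 =>
      have hdvd : m ∣ x + 1 := (Nat.modEq_zero_iff_dvd.mp hmod)
      have hle : m ≤ x + 1 := Nat.le_of_dvd (Nat.succ_pos x) hdvd
      have hstep : ModStep m (x + 1, 0) (x + 1 - m, 0) := Or.inl ⟨hle, rfl⟩
      refine Relation.ReflTransGen.head hstep (ih ((x + 1 - m) + 0) ?_ (x + 1 - m) 0 rfl ?_)
      · omega
      · exact Nat.modEq_zero_iff_dvd.mpr (Nat.dvd_sub hdvd (dvd_refl m))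
    | x + 1, y + 1 =>
      have hstep : ModStep m (x + 1, y + 1) (x, y) := by
        refine Or.inr (Or.inr ⟨Nat.succ_pos x, Nat.succ_pos y, by simp⟩)
      refine Relation.ReflTransGen.head hstep (ih (x + y) (by omega) x y rfl ?_)
      exact Nat.ModEq.add_right_cancel' 1 hmod

/-- From a nonzero input (x, y), the zero configuration is reachable iff
x ≡ y (mod m). -/
theorem exi_crd_mod_example (m : ℕ) (hm : 2 ≤ m) (x y : ℕ)
    (hxy : (x, y) ≠ (0, 0)) :
    Relation.ReflTransGen (ModStep m) (x, y) (0, 0) ↔ x ≡ y [MOD m] := by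
  constructor
  · intro h
    have hxy' : (x : ZMod m) = (y : ZMod m) := by
      have := modreach_inv m h
      simp only [] at this
      simpa [sub_eq_zero] using this
    exact (ZMod.natCast_eq_natCast_iff x y m).mp hxy'
  · exact reach_zero m hm (x + y) x y rfl
end
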